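/- Let ξ = ((m_1,n_1),(m_2,n_2)) be a Newton polygon with two segments such that m_r ≤ n_r for r = 1,2, and let ξ^C = ((m_1,n_1−m_1),(m_2,n_2−m_2)) be its curtailment (also a Newton polygon). Let φ : T(ξ^C) → T(ξ) be the map φ(r,i) = (r,i) (well defined since the r-th component of ξ^C has n_r symbols and n_r ≤ m_r+n_r). Then φ is an order embedding: for all t, t' ∈ T(ξ^C), t < t' in the linear order of S(ξ^C) if and only if φ(t) < φ(t') in the linear order of S(ξ). -/

import Mathlib

open scoped Classical

noncomputable section

/-- Symbols `(r, i)` (1-indexed component `r`, 1-indexed position `i`). -/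
abbrev Symb : Type := ℕ × ℕ

/-- A Newton polygon: a finite list of coprime pairs `(m_r, n_r)` with `m_r + n_r > 0`
and weakly decreasing slopes `n_r / (m_r + n_r)`. -/
structure NewtonPolygon where
  seg : List (ℕ × ℕ)
  coprime : ∀ p ∈ seg, Nat.Coprime p.1 p.2
  pos : ∀ p ∈ seg, 0 < p.1 + p.2
  slopes : ∀ r q : Fin seg.length, r ≤ q →
    ((seg.get q).2 : ℚ) / (((seg.get q).1 : ℚ) + ((seg.get q).2 : ℚ)) ≤
      ((seg.get r).2 : ℚ) / (((seg.get r).1 : ℚ) + ((seg.get r).2 : ℚ))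

namespace NewtonPolygon

/-- The number `z` of segments. -/
def z (ξ : NewtonPolygon) : ℕ := ξ.seg.length

/-- `m_r` (1-indexed). -/
def m (ξ : NewtonPolygon) (r : ℕ) : ℕ := (ξ.seg.getD (r - 1) (0, 0)).1

/-- `n_r` (1-indexed). -/
def n (ξ : NewtonPolygon) (r : ℕ) : ℕ := (ξ.seg.getD (r - 1) (0, 0)).2

/-- `h_r = m_r + n_r`. -/
def h (ξ : NewtonPolygon) (r : ℕ) : ℕ := ξ.m r + ξ.n r

/-- Membership in the symbol set `T(ξ) = {(r,i) : 1 ≤ r ≤ z, 1 ≤ i ≤ h_r}`. -/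
def mem (ξ : NewtonPolygon) (t : Symb) : Prop :=
  1 ≤ t.1 ∧ t.1 ≤ ξ.z ∧ 1 ≤ t.2 ∧ t.2 ≤ ξ.h t.1

/-- The symbol set `T(ξ)` as a finset. -/
def Tfin (ξ : NewtonPolygon) : Finset Symb :=
  ((Finset.Icc 1 ξ.z) ×ˢ (Finset.Icc 1 (ξ.seg.foldr (fun p s => p.1 + p.2 + s) 0))).filter
    (fun t => t.2 ≤ ξ.h t.1)

/-- The map `δ : T(ξ) → {0,1}`; `δ(r,i) = 1` iff `i ≤ m_r`. -/
def dlt (ξ : NewtonPolygon) (t : Symb) : ℕ := if t.2 ≤ ξ.m t.1 then 1 else 0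

/-- The bijection `π(r, i) = (r, ((i - m_r - 1) mod h_r) + 1)`. -/
def pmap (ξ : NewtonPolygon) (t : Symb) : Symb :=
  (t.1, (((t.2 : ℤ) - (ξ.m t.1 : ℤ) - 1) % ((ξ.h t.1 : ℤ))).toNat + 1)

/-- The inverse of `π`: `π⁻¹(r, i) = (r, ((i + m_r - 1) mod h_r) + 1)`. -/
def pinv (ξ : NewtonPolygon) (t : Symb) : Symb :=
  (t.1, (((t.2 : ℤ) + (ξ.m t.1 : ℤ) - 1) % ((ξ.h t.1 : ℤ))).toNat + 1)

/-- Binary expansion `b(t) = ∑_{k ≥ 1} δ(π^{-k}(t)) · 2^{-k}`. -/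
def bexp (ξ : NewtonPolygon) (t : Symb) : ℝ :=
  ∑' k : ℕ, (ξ.dlt (ξ.pinv^[k + 1] t) : ℝ) / 2 ^ (k + 1)

/-- The linear order on `T(ξ)`: `t < t'` iff `b(t) < b(t')`, or `b(t) = b(t')` and
`t` is in an earlier component. -/
def slt (ξ : NewtonPolygon) (t t' : Symb) : Prop :=
  ξ.bexp t < ξ.bexp t' ∨ (ξ.bexp t = ξ.bexp t' ∧ t.1 < t'.1)

/-- The length `ℓ(ξ)`: the number of pairs `t < t'` with `δ(t) = 0` and `δ(t') = 1`. -/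
def len (ξ : NewtonPolygon) : ℕ :=
  ((ξ.Tfin ×ˢ ξ.Tfin).filter (fun p => ξ.slt p.1 p.2 ∧ ξ.dlt p.1 = 0 ∧ ξ.dlt p.2 = 1)).card

/-- `π' = τ ∘ π`, the permutation of the small modification by `(u, v)`. -/
def pmod (ξ : NewtonPolygon) (u v : Symb) (t : Symb) : Symb := Equiv.swap u v (ξ.pmap t)

/-- The inverse of `π'`. -/
def pmodInv (ξ : NewtonPolygon) (u v : Symb) (t : Symb) : Symb := ξ.pinv (Equiv.swap u v t)

/-- `b'(t) = ∑_{k ≥ 1} δ(π'^{-k}(t)) · 2^{-k}` of the small modification by `(u, v)`. -/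
def bmod (ξ : NewtonPolygon) (u v : Symb) (t : Symb) : ℝ :=
  ∑' k : ℕ, (ξ.dlt ((ξ.pmodInv u v)^[k + 1] t) : ℝ) / 2 ^ (k + 1)

/-- The order of the small modification by `(u, v)`: the order of `S(ξ)` with the
positions of `u` and `v` exchanged. -/
def lt0 (ξ : NewtonPolygon) (u v : Symb) (t t' : Symb) : Prop :=
  ξ.slt (Equiv.swap u v t) (Equiv.swap u v t')

/-- `R` is a specialization of `S(ξ)` by `(u, v)`: a strict linear order on `T(ξ)`
such that `t ≺ t'` implies `b'(t) ≤ b'(t')`. -/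
def IsSpec (ξ : NewtonPolygon) (u v : Symb) (R : Symb → Symb → Prop) : Prop :=
  (∀ t ∈ ξ.Tfin, ¬ R t t) ∧
  (∀ t ∈ ξ.Tfin, ∀ t' ∈ ξ.Tfin, ∀ t'' ∈ ξ.Tfin, R t t' → R t' t'' → R t t'') ∧
  (∀ t ∈ ξ.Tfin, ∀ t' ∈ ξ.Tfin, t ≠ t' → R t t' ∨ R t' t) ∧
  (∀ t ∈ ξ.Tfin, ∀ t' ∈ ξ.Tfin, R t t' → ξ.bmod u v t ≤ ξ.bmod u v t')

/-- The length `ℓ(≺)` of an order `R`: the number of pairs `t ≺ t'` in `T(ξ)` with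
`δ(t) = 0` and `δ(t') = 1`. -/
def lenR (ξ : NewtonPolygon) (R : Symb → Symb → Prop) : ℕ :=
  ((ξ.Tfin ×ˢ ξ.Tfin).filter (fun p => R p.1 p.2 ∧ ξ.dlt p.1 = 0 ∧ ξ.dlt p.2 = 1)).card

/-- There exists a generic specialization of `S(ξ)` by `(u, v)`. -/
def ExGeneric (ξ : NewtonPolygon) (u v : Symb) : Prop :=
  ∃ R : Symb → Symb → Prop, ξ.IsSpec u v R ∧ (ξ.lenR R : ℤ) = (ξ.len : ℤ) - 1

/-- `α_k = π'^k(u)`. -/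
def alpha (ξ : NewtonPolygon) (u v : Symb) (k : ℕ) : Symb := (ξ.pmod u v)^[k] u

/-- `β_k = π'^k(v)`. -/
def beta (ξ : NewtonPolygon) (u v : Symb) (k : ℕ) : Symb := (ξ.pmod u v)^[k] v

/-- The set `A_k` computed with respect to an order `R`. -/
def AsetOf (ξ : NewtonPolygon) (u v : Symb) (R : Symb → Symb → Prop) (k : ℕ) : Finset Symb :=
  ξ.Tfin.filter (fun t =>
    (if k = 0 then ξ.dlt t = 0 else t.1 ≠ v.1 ∧ ξ.dlt t = ξ.dlt (ξ.alpha u v k)) ∧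
    R t (ξ.alpha u v k) ∧ R (ξ.alpha u v (k + 1)) (ξ.pmod u v t))

/-- The maximum of a finset for an order `R`. -/
def maxOf (R : Symb → Symb → Prop) (s : Finset Symb) : Symb :=
  if hmax : ∃ t, t ∈ s ∧ ∀ t' ∈ s, t' ≠ t → R t' t then hmax.choose else (0, 0)

/-- The minimum of a finset for an order `R`. -/
def minOf (R : Symb → Symb → Prop) (s : Finset Symb) : Symb :=
  if hmin : ∃ t, t ∈ s ∧ ∀ t' ∈ s, t' ≠ t → R t t' then hmin.choose else (0, 0)

/-- The pairs `(t, t')` reversed in a step of Construction A: `t = α_k` and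
`α_k <_{k-1} t' ≤_{k-1} w` where `w = π'(t_max)`. -/
def revA (R : Symb → Symb → Prop) (a w : Symb) (t t' : Symb) : Prop :=
  t = a ∧ R t t' ∧ (R t' w ∨ t' = w)

/-- One step of Construction A. -/
def stepA (R : Symb → Symb → Prop) (a w : Symb) : Symb → Symb → Prop :=
  fun t t' => (R t t' ∧ ¬ revA R a w t t') ∨ revA R a w t' t

/-- The pairs `(t, t')` reversed in a step of Construction B: `t' = β_k` and
`w ≤_{k-1} t <_{k-1} β_k` where `w = π'(t_min)`. -/
def revB (R : Symb → Symb → Prop) (b w : Symb) (t t' : Symb) : Prop :=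
  t' = b ∧ R t t' ∧ (R w t ∨ t = w)

/-- One step of Construction B. -/
def stepB (R : Symb → Symb → Prop) (b w : Symb) : Symb → Symb → Prop :=
  fun t t' => (R t t' ∧ ¬ revB R b w t t') ∨ revB R b w t' t

/-- The order `<_k` of Construction A (for `k ≥ 1`, meaningful when `A_{k-1} ≠ ∅`). -/
def ordA (ξ : NewtonPolygon) (u v : Symb) : ℕ → Symb → Symb → Prop
  | 0 => ξ.lt0 u v
  | k + 1 =>
      stepA (ordA ξ u v k) (ξ.alpha u v (k + 1))
        (ξ.pmod u v (maxOf (ordA ξ u v k) (ξ.AsetOf u v (ordA ξ u v k) k)))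

/-- The set `A_k` of Construction A. -/
def Aset (ξ : NewtonPolygon) (u v : Symb) (k : ℕ) : Finset Symb :=
  ξ.AsetOf u v (ordA ξ u v k) k

/-- The set `B_k` computed with respect to an order `R`. -/
def BsetOf (ξ : NewtonPolygon) (u v : Symb) (R : Symb → Symb → Prop) (k : ℕ) : Finset Symb :=
  ξ.Tfin.filter (fun t =>
    (if k = 0 then ξ.dlt t = 1 else ξ.dlt t = ξ.dlt (ξ.beta u v k)) ∧
    R (ξ.beta u v k) t ∧ R (ξ.pmod u v t) (ξ.beta u v (k + 1)))

/-- The order `<_{a+k}` of Construction B (for `k ≥ 1`, meaningful when `B_{k-1} ≠ ∅`). -/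
def ordB (ξ : NewtonPolygon) (u v : Symb) (a : ℕ) : ℕ → Symb → Symb → Prop
  | 0 => ordA ξ u v a
  | k + 1 =>
      stepB (ordB ξ u v a k) (ξ.beta u v (k + 1))
        (ξ.pmod u v (minOf (ordB ξ u v a k) (ξ.BsetOf u v (ordB ξ u v a k) k)))

/-- The set `B_k` of Construction B. -/
def Bset (ξ : NewtonPolygon) (u v : Symb) (a k : ℕ) : Finset Symb :=
  ξ.BsetOf u v (ordB ξ u v a k) k

end NewtonPolygon



namespace S4

def binSeq (c : ℕ → ℕ) : Prop := ∀ k, c k ≤ 1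

def NoTail (c : ℕ → ℕ) : Prop := ∀ K, c K = 0 → ∃ L, K < L ∧ c L = 0

noncomputable def val (c : ℕ → ℕ) : ℝ := ∑' k : ℕ, (c k : ℝ) / 2 ^ (k + 1)

def sig (c : ℕ → ℕ) (k : ℕ) : ℕ := k + 1 + ∑ k' ∈ Finset.range (k + 1), c k'

noncomputable def Dfun (c : ℕ → ℕ) (K : ℕ) : ℕ :=
  if ∃ k, sig c k = K + 1 ∧ c k = 1 then 1 else 0

lemma binSeq_Dfun (c : ℕ → ℕ) : binSeq (Dfun c) := by
  intro k; unfold Dfun; split <;> omega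

lemma summable_val {c : ℕ → ℕ} (hc : binSeq c) :
    Summable (fun k => (c k : ℝ) / 2 ^ (k + 1)) := by
  have hnn : ∀ k : ℕ, (0 : ℝ) ≤ (c k : ℝ) / 2 ^ (k + 1) := fun k => by positivity
  have hle : ∀ k : ℕ, (c k : ℝ) / 2 ^ (k + 1) ≤ (1 / 2 : ℝ) ^ k := by
    intro k
    have h1 : (c k : ℝ) ≤ 1 := by exact_mod_cast hc k
    have h3 : (2 : ℝ) ^ k ≤ 2 ^ (k + 1) := by
      have : (2:ℝ) ^ (k+1) = 2^k * 2 := pow_succ 2 k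
      nlinarith [pow_pos (show (0:ℝ) < 2 by norm_num) k]
    calc (c k : ℝ) / 2 ^ (k + 1) ≤ 1 / 2 ^ (k + 1) := by gcongr
      _ ≤ 1 / 2 ^ k := one_div_le_one_div_of_le (by positivity) h3
      _ = (1 / 2 : ℝ) ^ k := by rw [div_pow, one_pow]
  exact Summable.of_nonneg_of_le hnn hle summable_geometric_two

lemma val_lt {c c' : ℕ → ℕ} (hc : binSeq c) (hc' : binSeq c') {K L : ℕ}
    (hpre : ∀ k < K, c k = c' k) (h0 : c K = 0) (h1 : c' K = 1) (hKL : K < L)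
    (hL : c L = 0) : val c < val c' := by
  have hsum : Summable (fun k => (c k : ℝ) / 2 ^ (k + 1)) := summable_val hc
  have hsum' : Summable (fun k => (c' k : ℝ) / 2 ^ (k + 1)) := summable_val hc'
  set f : ℕ → ℝ := fun k => (c k : ℝ) / 2 ^ (k + 1) with hf
  set g : ℕ → ℝ := fun k : ℕ => (1 : ℝ) / 2 ^ (k + K + 2) with hg
  have hgeq : ∀ k, g k = (1 / 2 : ℝ) ^ k * (1 / 2 ^ (K + 2)) := by
    intro k
    show (1:ℝ) / 2 ^ (k + K + 2) = (1/2:ℝ) ^ k * (1 / 2 ^ (K + 2))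
    rw [div_pow, one_pow, div_mul_div_comm, one_mul, ← pow_add, add_assoc]
  have hgsum : Summable g := by
    rw [show g = fun k => (1 / 2 : ℝ) ^ k * (1 / 2 ^ (K + 2)) from funext hgeq]
    exact summable_geometric_two.mul_right _
  have hgsumval : ∑' k, g k = 1 / 2 ^ (K + 1) := by
    calc ∑' k, g k = ∑' k : ℕ, (1 / 2 : ℝ) ^ k * (1 / 2 ^ (K + 2)) := tsum_congr hgeq
      _ = (∑' k : ℕ, (1 / 2 : ℝ) ^ k) * (1 / 2 ^ (K + 2)) := tsum_mul_right
      _ = 2 * (1 / 2 ^ (K + 2)) := by rw [tsum_geometric_two]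
      _ = 1 / 2 ^ (K + 1) := by
          have h2 : (2 : ℝ) ^ (K + 1) ≠ 0 := by positivity
          rw [pow_succ]; field_simp
  have hfs : Summable (fun k => f (k + (K + 1))) := by
    exact (summable_nat_add_iff (K + 1)).mpr hsum
  have hfg : ∀ k, f (k + (K + 1)) ≤ g k := by
    intro k
    have e : k + (K + 1) + 1 = k + K + 2 := by omega
    show (c (k + (K + 1)) : ℝ) / 2 ^ (k + (K + 1) + 1) ≤ (1 : ℝ) / 2 ^ (k + K + 2)
    rw [e]
    gcongr
    exact_mod_cast hc _
  have htail : ∑' k, f (k + (K + 1)) ≤ 1 / 2 ^ (K + 1) - 1 / 2 ^ (L + 1) := by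
    have hdiff : Summable (fun k => g k - f (k + (K + 1))) := hgsum.sub hfs
    have hterm : (1 : ℝ) / 2 ^ (L + 1) ≤ ∑' k, (g k - f (k + (K + 1))) := by
      have hnn : ∀ j : ℕ, j ≠ L - (K + 1) → (0 : ℝ) ≤ g j - f (j + (K + 1)) := by
        intro j _; linarith [hfg j]
      have hle := Summable.le_tsum hdiff (L - (K + 1)) hnn
      have he1 : L - (K + 1) + (K + 1) = L := by omega
      have he2 : g (L - (K + 1)) = 1 / 2 ^ (L + 1) := by
        simp only [hg]
        rw [show L - (K + 1) + K + 2 = L + 1 from by omega]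
      rw [he1] at hle
      have he3 : f L = 0 := by
        show (c L : ℝ) / 2 ^ (L + 1) = 0
        rw [hL]; simp
      rw [he2, he3] at hle
      linarith
    have hsub : ∑' k, (g k - f (k + (K + 1))) = 1 / 2 ^ (K + 1) - ∑' k, f (k + (K + 1)) := by
      rw [Summable.tsum_sub hgsum hfs, hgsumval]
    linarith [hterm, hsub.symm.le, hsub.le]
  have hsplit : (∑ k ∈ Finset.range (K + 1), f k) + ∑' k, f (k + (K + 1)) = val c :=
    Summable.sum_add_tsum_nat_add (K + 1) hsum
  have hlow : ∑ k ∈ Finset.range (K + 1), (c' k : ℝ) / 2 ^ (k + 1) ≤ val c' :=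
    Summable.sum_le_tsum _ (fun i _ => by positivity) hsum'
  have hpref : ∑ k ∈ Finset.range (K + 1), (c' k : ℝ) / 2 ^ (k + 1)
      = (∑ k ∈ Finset.range (K + 1), f k) + 1 / 2 ^ (K + 1) := by
    rw [Finset.sum_range_succ, Finset.sum_range_succ]
    have hcongr : ∑ k ∈ Finset.range K, (c' k : ℝ) / 2 ^ (k + 1)
        = ∑ k ∈ Finset.range K, f k := by
      apply Finset.sum_congr rfl
      intro i hi
      have := hpre i (Finset.mem_range.mp hi)
      show (c' i : ℝ) / 2 ^ (i + 1) = (c i : ℝ) / 2 ^ (i + 1)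
      rw [this]
    rw [hcongr, h1]
    have : f K = 0 := by show (c K : ℝ) / 2 ^ (K + 1) = 0; rw [h0]; simp
    rw [this]
    push_cast
    ring
  have hpos : (0 : ℝ) < 1 / 2 ^ (L + 1) := by positivity
  linarith [hsplit, htail, hlow, hpref]

lemma tri {c c' : ℕ → ℕ} (hc : binSeq c) (hc' : binSeq c') :
    c = c' ∨ (∃ K, (∀ k < K, c k = c' k) ∧ c K = 0 ∧ c' K = 1) ∨
      (∃ K, (∀ k < K, c k = c' k) ∧ c' K = 0 ∧ c K = 1) := by
  by_cases h : ∀ k, c k = c' k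
  · exact Or.inl (funext h)
  · push_neg at h
    have hK := Nat.find_spec h
    set K := Nat.find h with hKdef
    have hpre : ∀ k < K, c k = c' k := fun k hk => not_not.mp (Nat.find_min h hk)
    have hcK := hc K
    have hcK' := hc' K
    have : (c K = 0 ∧ c' K = 1) ∨ (c' K = 0 ∧ c K = 1) := by omega
    rcases this with ⟨ha, hb⟩ | ⟨ha, hb⟩
    · exact Or.inr (Or.inl ⟨K, hpre, ha, hb⟩)
    · exact Or.inr (Or.inr ⟨K, hpre, ha, hb⟩)

lemma sig_succ (c : ℕ → ℕ) (k : ℕ) : sig c (k + 1) = sig c k + 1 + c (k + 1) := by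
  simp [sig, Finset.sum_range_succ]; omega

lemma sig_strictMono (c : ℕ → ℕ) : StrictMono (sig c) := by
  apply strictMono_nat_of_lt_succ
  intro k
  rw [sig_succ]
  omega

lemma sig_congr {c c' : ℕ → ℕ} {K : ℕ} (h : ∀ k < K, c k = c' k) {k : ℕ} (hk : k < K) :
    sig c k = sig c' k := by
  unfold sig
  congr 1
  apply Finset.sum_congr rfl
  intro i hi
  exact h i (by have := Finset.mem_range.mp hi; omega)

lemma Dfun_lex {c c' : ℕ → ℕ} (hc : binSeq c) (hc' : binSeq c') (K : ℕ)
    (hpre : ∀ k < K, c k = c' k) (h0 : c K = 0) (h1 : c' K = 1) :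
    ∃ K', (∀ A < K', Dfun c A = Dfun c' A) ∧ Dfun c K' = 0 ∧ Dfun c' K' = 1 := by
  set S := ∑ k' ∈ Finset.range K, c k' with hS
  have hsum' : ∑ k' ∈ Finset.range K, c' k' = S := by
    rw [hS]
    apply Finset.sum_congr rfl
    intro i hi
    exact (hpre i (Finset.mem_range.mp hi)).symm
  have hsig : sig c K = K + 1 + S := by
    unfold sig
    rw [Finset.sum_range_succ, h0, hS]
    omega
  have hsig' : sig c' K = K + 2 + S := by
    unfold sig
    rw [Finset.sum_range_succ, hsum', h1]
    omega
  refine ⟨K + S + 1, ?_, ?_, ?_⟩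
  · intro A hA
    have hiff : (∃ k, sig c k = A + 1 ∧ c k = 1) ↔ (∃ k, sig c' k = A + 1 ∧ c' k = 1) := by
      constructor
      · rintro ⟨k, hk1, hk2⟩
        have hkK : k < K := by
          by_contra hge
          have : sig c K ≤ sig c k := (sig_strictMono c).monotone (by omega)
          rcases Nat.eq_or_lt_of_le (by omega : K ≤ k) with h | h
          · subst h; omega
          · have : sig c K < sig c k := sig_strictMono c h
            omega
        exact ⟨k, by rw [← sig_congr hpre hkK]; exact hk1, by rw [← hpre k hkK]; exact hk2⟩
      · rintro ⟨k, hk1, hk2⟩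
        have hkK : k < K := by
          by_contra hge
          have : sig c' K ≤ sig c' k := (sig_strictMono c').monotone (by omega)
          omega
        exact ⟨k, by rw [sig_congr hpre hkK]; exact hk1, by rw [hpre k hkK]; exact hk2⟩
    simp only [Dfun, hiff]
  · unfold Dfun
    rw [if_neg]
    rintro ⟨k, hk1, hk2⟩
    rcases lt_trichotomy k K with h | h | h
    · have : sig c k < sig c K := sig_strictMono c h
      omega
    · subst h; omega
    · have h1le : sig c (K + 1) ≤ sig c k := (sig_strictMono c).monotone (by omega)
      have hs1 : sig c (K + 1) = K + 2 + S + c (K + 1) := by rw [sig_succ, hsig]; omega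
      rcases Nat.eq_or_lt_of_le (by omega : K + 1 ≤ k) with he | he
      · rw [← he] at hk1 hk2; omega
      · have : sig c (K + 1) < sig c k := sig_strictMono c he
        omega
  · unfold Dfun
    rw [if_pos ⟨K, by omega, h1⟩]

lemma master {c c' : ℕ → ℕ} (hc : binSeq c) (hc' : binSeq c')
    (ntc : NoTail c) (ntc' : NoTail c') (ntD : NoTail (Dfun c)) (ntD' : NoTail (Dfun c')) :
    (val c < val c' ↔ val (Dfun c) < val (Dfun c')) ∧
      (val c = val c' ↔ val (Dfun c) = val (Dfun c')) := by
  have hDc := binSeq_Dfun c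
  have hDc' := binSeq_Dfun c'
  rcases tri hc hc' with h | ⟨K, hpre, h0, h1⟩ | ⟨K, hpre, h0, h1⟩
  · subst h
    exact ⟨iff_of_false (lt_irrefl _) (lt_irrefl _), iff_of_true rfl rfl⟩
  · obtain ⟨L, hKL, hL⟩ := ntc K h0
    have hlt : val c < val c' := val_lt hc hc' hpre h0 h1 hKL hL
    obtain ⟨K', hpre', h0', h1'⟩ := Dfun_lex hc hc' K hpre h0 h1
    obtain ⟨L', hKL', hL'⟩ := ntD K' h0'
    have hlt2 : val (Dfun c) < val (Dfun c') := val_lt hDc hDc' hpre' h0' h1' hKL' hL'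
    exact ⟨iff_of_true hlt hlt2, iff_of_false (ne_of_lt hlt) (ne_of_lt hlt2)⟩
  · obtain ⟨L, hKL, hL⟩ := ntc' K h0
    have hlt : val c' < val c := val_lt hc' hc (fun k hk => (hpre k hk).symm) h0 h1 hKL hL
    obtain ⟨K', hpre', h0', h1'⟩ := Dfun_lex hc' hc K (fun k hk => (hpre k hk).symm) h0 h1
    obtain ⟨L', hKL', hL'⟩ := ntD' K' h0'
    have hlt2 : val (Dfun c') < val (Dfun c) := val_lt hDc' hDc hpre' h0' h1' hKL' hL'
    exact ⟨iff_of_false (not_lt_of_gt hlt) (not_lt_of_gt hlt2),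
      iff_of_false (ne_of_gt hlt) (ne_of_gt hlt2)⟩

lemma quotrem {n q r q' r' m : ℕ} (hn : 0 < n) (hr : r < n) (hr' : r' < n) (hmn : m ≤ n)
    (he : n * q + r = n * q' + r' + m) : q = q' + (if r < m then 1 else 0) := by
  have hq1 : q ≤ q' + 1 := by
    by_contra h
    have h3 : n * (q' + 2) ≤ n * q := Nat.mul_le_mul_left n (by omega)
    rw [Nat.mul_add] at h3
    omega
  have hq2 : q' ≤ q := by
    by_contra h
    have h3 : n * (q + 1) ≤ n * q' := Nat.mul_le_mul_left n (by omega)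
    rw [Nat.mul_add] at h3
    omega
  rcases (by omega : q = q' ∨ q = q' + 1) with h | h <;> subst h
  · have hge : ¬ r < m := by omega
    simp [hge]
  · have h3 : n * (q' + 1) = n * q' + n := by rw [Nat.mul_add]; omega
    have hlt : r < m := by omega
    simp [hlt]

lemma floorid {m n : ℕ} (x : ℕ) (hmn : m ≤ n) (hn : 0 < n) (hx : m ≤ x) :
    x / n = (x - m) / n + (if x % n < m then 1 else 0) := by
  have e1 := Nat.div_add_mod x n
  have e2 := Nat.div_add_mod (x - m) n
  have he : n * (x / n) + x % n = n * ((x - m) / n) + (x - m) % n + m := by omega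
  exact quotrem hn (Nat.mod_lt _ hn) (Nat.mod_lt _ hn) hmn he

lemma Gsum {m n : ℕ} (j : ℕ) (hmn : m ≤ n) (hn : 0 < n) (hj : j < n) (k : ℕ) :
    (∑ k' ∈ Finset.range (k + 1), if (j + (k' + 1) * m) % n < m then 1 else 0)
      = (j + (k + 1) * m) / n := by
  induction k with
  | zero =>
      rw [Finset.sum_range_one]
      have h := floorid (m := m) (n := n) (j + (0 + 1) * m) hmn hn (by omega)
      rw [h, show j + (0 + 1) * m - m = j from by omega, Nat.div_eq_of_lt hj]
      omega
  | succ k ih =>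
      rw [Finset.sum_range_succ, ih]
      have hmm : m ≤ (k + 1 + 1) * m := Nat.le_mul_of_pos_left m (by omega)
      have h := floorid (m := m) (n := n) (j + (k + 1 + 1) * m) hmn hn (by omega)
      have he : j + (k + 1 + 1) * m - m = j + (k + 1) * m := by
        have : (k + 1 + 1) * m = (k + 1) * m + m := by ring
        omega
      rw [h, he]

lemma key {m n : ℕ} (j : ℕ) (hmn : m ≤ n) (hn : 0 < n) (hj : j < n) (K : ℕ) :
    (if (j + (K + 1) * m) % (m + n) < m then 1 else 0)
      = Dfun (fun k => if (j + (k + 1) * m) % n < m then 1 else 0) K := by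
  set c : ℕ → ℕ := fun k => if (j + (k + 1) * m) % n < m then 1 else 0 with hcdef
  have hsig : ∀ k, sig c k = (k + 1) + (j + (k + 1) * m) / n := by
    intro k
    unfold sig
    rw [show (∑ k' ∈ Finset.range (k + 1), c k')
      = ∑ k' ∈ Finset.range (k + 1), if (j + (k' + 1) * m) % n < m then 1 else 0 from rfl]
    rw [Gsum j hmn hn hj k]
  have hiff : ((j + (K + 1) * m) % (m + n) < m) ↔ (∃ k, sig c k = K + 1 ∧ c k = 1) := by
    constructor
    · intro hlt
      have hmn0 : 0 < m + n := by omega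
      set q := (j + (K + 1) * m) / (m + n) with hq
      set ρ := (j + (K + 1) * m) % (m + n) with hρ
      have hdm : (m + n) * q + ρ = j + (K + 1) * m := Nat.div_add_mod _ _
      have hρm : ρ < m := hlt
      have hqK : q ≤ K := by
        have h2 : n ≤ (K + 1) * n := Nat.le_mul_of_pos_left n (by omega)
        have h3 : (m + n) * q < (m + n) * (K + 1) := by
          have h4 : (m + n) * (K + 1) = (K + 1) * m + (K + 1) * n := by ring
          omega
        have h5 : q < K + 1 := Nat.lt_of_mul_lt_mul_left h3
        omega
      have hx : j + (K - q + 1) * m = n * q + ρ := by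
        have h1 : (K - q + 1) * m + q * m = (K + 1) * m := by
          rw [← Nat.add_mul]; congr 1; omega
        have h3 : j + (K - q + 1) * m + q * m = n * q + ρ + q * m := by
          calc j + (K - q + 1) * m + q * m = j + (K + 1) * m := by omega
            _ = (m + n) * q + ρ := hdm.symm
            _ = n * q + ρ + q * m := by ring
        omega
      refine ⟨K - q, ?_, ?_⟩
      · rw [hsig, hx, Nat.mul_add_div hn, Nat.div_eq_of_lt (by omega : ρ < n)]
        omega
      · show (if (j + (K - q + 1) * m) % n < m then 1 else 0) = 1
        rw [if_pos]
        rw [hx, Nat.mul_add_mod, Nat.mod_eq_of_lt (by omega : ρ < n)]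
        exact hρm
    · rintro ⟨k, hk1, hk2⟩
      have hck : (j + (k + 1) * m) % n < m := by
        by_contra hno
        have hzero : c k = 0 := by simp [hcdef, hno]
        omega
      set q := (j + (k + 1) * m) / n with hq
      set ρ := (j + (k + 1) * m) % n with hρ
      have hdm : n * q + ρ = j + (k + 1) * m := Nat.div_add_mod _ _
      have hρm : ρ < m := hck
      have hkK : k + 1 + q = K + 1 := by rw [hsig] at hk1; omega
      have hy : j + (K + 1) * m = (m + n) * q + ρ := by
        have h1 : (K + 1) * m = (k + 1) * m + q * m := by
          rw [← Nat.add_mul]; congr 1; omega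
        calc j + (K + 1) * m = j + (k + 1) * m + q * m := by omega
          _ = n * q + ρ + q * m := by omega
          _ = (m + n) * q + ρ := by ring
      rw [hy, Nat.mul_add_mod, Nat.mod_eq_of_lt (by omega : ρ < m + n)]
      exact hρm
  by_cases h : (j + (K + 1) * m) % (m + n) < m
  · rw [if_pos h]; unfold Dfun; rw [if_pos (hiff.mp h)]
  · rw [if_neg h]; unfold Dfun; rw [if_neg (fun hx => h (hiff.mpr hx))]

end S4

section Glue
open S4

lemma binSeq_ite (P : ℕ → Prop) [DecidablePred P] :
    binSeq (fun k => if P k then 1 else 0) := by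
  intro k; dsimp only; split <;> omega

lemma pinv_iter (ξ : NewtonPolygon) (t : Symb) (hi : 1 ≤ t.2) (k : ℕ) :
    ξ.pinv^[k + 1] t = (t.1, (t.2 - 1 + (k + 1) * ξ.m t.1) % ξ.h t.1 + 1) := by
  have cast_mod : ∀ a b : ℕ, (((a : ℕ) : ℤ) % ((b : ℕ) : ℤ)).toNat = a % b := by
    intro a b
    rw [← Int.natCast_mod, Int.toNat_natCast]
  induction k with
  | zero =>
      rw [Function.iterate_one]
      show (t.1, (((t.2 : ℤ) + (ξ.m t.1 : ℤ) - 1) % ((ξ.h t.1 : ℤ))).toNat + 1) = _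
      have h1 : ((t.2 : ℤ) + (ξ.m t.1 : ℤ) - 1) = ((t.2 - 1 + (0 + 1) * ξ.m t.1 : ℕ) : ℤ) := by
        push_cast [Nat.cast_sub hi]
        ring
      rw [h1, cast_mod]
  | succ k ih =>
      rw [Function.iterate_succ_apply', ih]
      show (t.1, (((((t.2 - 1 + (k + 1) * ξ.m t.1) % ξ.h t.1 + 1 : ℕ) : ℤ) + (ξ.m t.1 : ℤ) - 1) % ((ξ.h t.1 : ℤ))).toNat + 1) = _
      have h1 : (((t.2 - 1 + (k + 1) * ξ.m t.1) % ξ.h t.1 + 1 : ℕ) : ℤ) + (ξ.m t.1 : ℤ) - 1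
          = (((t.2 - 1 + (k + 1) * ξ.m t.1) % ξ.h t.1 + ξ.m t.1 : ℕ) : ℤ) := by
        push_cast; ring
      rw [h1, cast_mod, Nat.mod_add_mod,
        show t.2 - 1 + (k + 1) * ξ.m t.1 + ξ.m t.1 = t.2 - 1 + (k + 1 + 1) * ξ.m t.1 from by ring]

lemma dseq_formula (ξ : NewtonPolygon) (t : Symb) (hi : 1 ≤ t.2) (k : ℕ) :
    ξ.dlt (ξ.pinv^[k + 1] t)
      = if (t.2 - 1 + (k + 1) * ξ.m t.1) % ξ.h t.1 < ξ.m t.1 then 1 else 0 := by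
  rw [pinv_iter ξ t hi k]
  show (if (t.2 - 1 + (k + 1) * ξ.m t.1) % ξ.h t.1 + 1 ≤ ξ.m t.1 then 1 else 0) = _
  by_cases h : (t.2 - 1 + (k + 1) * ξ.m t.1) % ξ.h t.1 < ξ.m t.1
  · rw [if_pos (by omega), if_pos h]
  · rw [if_neg (by omega), if_neg h]

lemma NoTail_base (m n j : ℕ) (hn : 0 < n) :
    NoTail (fun k => if (j + (k + 1) * m) % n < m then 1 else 0) := by
  intro K h0
  refine ⟨K + n, by omega, ?_⟩
  have hmod : (j + (K + n + 1) * m) % n = (j + (K + 1) * m) % n := by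
    rw [show j + (K + n + 1) * m = j + (K + 1) * m + n * m from by ring,
      Nat.add_mul_mod_self_left]
  simp only at h0 ⊢
  rw [hmod]
  exact h0

lemma NoTail_Dfun (m n j : ℕ) (hmn : m ≤ n) (hn : 0 < n) (hj : j < n) :
    NoTail (Dfun (fun k => if (j + (k + 1) * m) % n < m then 1 else 0)) := by
  have hform : ∀ K, Dfun (fun k => if (j + (k + 1) * m) % n < m then 1 else 0) K
      = if (j + (K + 1) * m) % (m + n) < m then 1 else 0 := fun K => (key j hmn hn hj K).symm
  intro K h0
  refine ⟨K + (m + n), by omega, ?_⟩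
  rw [hform] at h0 ⊢
  rw [show j + (K + (m + n) + 1) * m = j + (K + 1) * m + (m + n) * m from by ring,
    Nat.add_mul_mod_self_left]
  exact h0

lemma comp_facts (ξ ξC : NewtonPolygon) (m1 n1 m2 n2 : ℕ)
    (hseg : ξ.seg = [(m1, n1), (m2, n2)]) (hm1 : m1 ≤ n1) (hm2 : m2 ≤ n2)
    (hsegC : ξC.seg = [(m1, n1 - m1), (m2, n2 - m2)]) (r : ℕ) (hr1 : 1 ≤ r) (hr2 : r ≤ ξC.z) :
    ξ.m r = ξC.m r ∧ ξ.h r = ξC.m r + ξC.h r ∧ ξC.m r ≤ ξC.h r ∧ 0 < ξC.h r := by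
  have hz : ξC.z = 2 := by simp [NewtonPolygon.z, hsegC]
  have p1 : 0 < m1 + (n1 - m1) := ξC.pos (m1, n1 - m1) (by rw [hsegC]; simp)
  have p2 : 0 < m2 + (n2 - m2) := ξC.pos (m2, n2 - m2) (by rw [hsegC]; simp)
  rw [hz] at hr2
  interval_cases r <;>
    refine ⟨?_, ?_, ?_, ?_⟩ <;>
      simp [NewtonPolygon.m, NewtonPolygon.n, NewtonPolygon.h, hseg, hsegC] <;> omega

lemma symb_data (ξ ξC : NewtonPolygon) (t : Symb) (m n : ℕ)
    (hmξ : ξ.m t.1 = m) (hhξ : ξ.h t.1 = m + n)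
    (hmξC : ξC.m t.1 = m) (hhξC : ξC.h t.1 = n)
    (hmn : m ≤ n) (hn : 0 < n) (hi : 1 ≤ t.2) (hi2 : t.2 ≤ n) :
    ξC.bexp t = val (fun k => if (t.2 - 1 + (k + 1) * m) % n < m then 1 else 0) ∧
      ξ.bexp t = val (Dfun (fun k => if (t.2 - 1 + (k + 1) * m) % n < m then 1 else 0)) := by
  constructor
  · unfold NewtonPolygon.bexp val
    apply tsum_congr
    intro k
    show ((ξC.dlt (ξC.pinv^[k + 1] t) : ℕ) : ℝ) / 2 ^ (k + 1)
      = ((if (t.2 - 1 + (k + 1) * m) % n < m then 1 else 0 : ℕ) : ℝ) / 2 ^ (k + 1)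
    have h := dseq_formula ξC t hi k
    rw [hmξC, hhξC] at h
    rw [h]
  · unfold NewtonPolygon.bexp val
    apply tsum_congr
    intro k
    show ((ξ.dlt (ξ.pinv^[k + 1] t) : ℕ) : ℝ) / 2 ^ (k + 1)
      = ((Dfun (fun k => if (t.2 - 1 + (k + 1) * m) % n < m then 1 else 0) k : ℕ) : ℝ) / 2 ^ (k + 1)
    have h := dseq_formula ξ t hi k
    rw [hmξ, hhξ] at h
    rw [h, key (t.2 - 1) hmn hn (by omega) k]

end Glue

/-- for a two-segment Newton polygon `ξ` with `m_r ≤ n_r` and its curtailment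
`ξ^C`, the inclusion `φ(r,i) = (r,i)` of `T(ξ^C)` into `T(ξ)` is an order embedding. -/
theorem statement4 (ξ ξC : NewtonPolygon) (m1 n1 m2 n2 : ℕ)
    (hseg : ξ.seg = [(m1, n1), (m2, n2)]) (hm1 : m1 ≤ n1) (hm2 : m2 ≤ n2)
    (hsegC : ξC.seg = [(m1, n1 - m1), (m2, n2 - m2)]) :
    ∀ t t' : Symb, ξC.mem t → ξC.mem t' → (ξC.slt t t' ↔ ξ.slt t t') := by
  intro t t' ht ht'
  obtain ⟨ht1, ht2, ht3, ht4⟩ := ht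
  obtain ⟨hs1, hs2, hs3, hs4⟩ := ht'
  obtain ⟨e1, e2, e3, e4⟩ := comp_facts ξ ξC m1 n1 m2 n2 hseg hm1 hm2 hsegC t.1 ht1 ht2
  obtain ⟨f1, f2, f3, f4⟩ := comp_facts ξ ξC m1 n1 m2 n2 hseg hm1 hm2 hsegC t'.1 hs1 hs2
  obtain ⟨hbC, hb⟩ := symb_data ξ ξC t (ξC.m t.1) (ξC.h t.1) e1 (by omega) rfl rfl e3 e4 ht3 ht4
  obtain ⟨hbC', hb'⟩ := symb_data ξ ξC t' (ξC.m t'.1) (ξC.h t'.1) f1 (by omega) rfl rfl f3 f4 hs3 hs4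
  obtain ⟨hiff1, hiff2⟩ :=
    S4.master
      (c := fun k => if (t.2 - 1 + (k + 1) * ξC.m t.1) % ξC.h t.1 < ξC.m t.1 then 1 else 0)
      (c' := fun k => if (t'.2 - 1 + (k + 1) * ξC.m t'.1) % ξC.h t'.1 < ξC.m t'.1 then 1 else 0)
      (binSeq_ite _) (binSeq_ite _)
      (NoTail_base _ _ _ e4) (NoTail_base _ _ _ f4)
      (NoTail_Dfun _ _ _ e3 e4 (by omega)) (NoTail_Dfun _ _ _ f3 f4 (by omega))
  unfold NewtonPolygon.slt
  rw [hbC, hbC', hb, hb', hiff1, hiff2]
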